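/- arXiv:2401.10459 — 7 statements merged into one kernel-verified Lean document; each statement's English description precedes it below -/
import Mathlib

section
/- Let X be a countably tight completely regular Hausdorff space. Then X is weakly Grothendieck; that is, Cp(X) is a g-space: every subset A of Cp(X) that is countably compact in Cp(X) has compact closure in Cp(X). -/
open Set Filter Topology

def IsLimitPointOf {Z : Type*} [TopologicalSpace Z] (x : Z) (S : Set Z) : Prop :=
  ∀ U : Set Z, IsOpen U → x ∈ U → (S ∩ U).Infinite

def CountablyCompactIn {Z : Type*} [TopologicalSpace Z] (A B : Set Z) : Prop :=
  ∀ S ⊆ A, S.Infinite → ∃ x ∈ B, IsLimitPointOf x S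

def IsGSpace (Y : Type*) [TopologicalSpace Y] : Prop :=
  ∀ A : Set Y, CountablyCompactIn A Set.univ → IsCompact (closure A)

def IsHereditaryGSpace (Y : Type*) [TopologicalSpace Y] : Prop :=
  ∀ B : Set Y, IsGSpace B

def Cp (X : Type*) [TopologicalSpace X] : Type _ := {f : X → ℝ // Continuous f}

instance (X : Type*) [TopologicalSpace X] : TopologicalSpace (Cp X) :=
  inferInstanceAs (TopologicalSpace {f : X → ℝ // Continuous f})

def CpI (X : Type*) [TopologicalSpace X] : Type _ := {f : X → unitInterval // Continuous f}

instance (X : Type*) [TopologicalSpace X] : TopologicalSpace (CpI X) :=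
  inferInstanceAs (TopologicalSpace {f : X → unitInterval // Continuous f})

def CountablyTight (X : Type*) [TopologicalSpace X] : Prop :=
  ∀ (A : Set X) (x : X), x ∈ closure A → ∃ B ⊆ A, B.Countable ∧ x ∈ closure B

def CountablyCompactSpace' (Y : Type*) [TopologicalSpace Y] : Prop :=
  ∀ S : Set Y, S.Infinite → ∃ x : Y, IsLimitPointOf x S

def DULC {X : Type*} [TopologicalSpace X] (A : Set (CpI X)) : Prop :=
  ∀ (f : ℕ → CpI X), (∀ n, f n ∈ A) → ∀ (x : ℕ → X) (𝒰 𝒱 : Ultrafilter ℕ),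
    (∃ y : X, Filter.Tendsto x (𝒱 : Filter ℕ) (nhds y)) →
    ∀ (g h : ℕ → unitInterval) (u v : unitInterval),
      (∀ n, Filter.Tendsto (fun m => (f n).1 (x m)) (𝒱 : Filter ℕ) (nhds (g n))) →
      Filter.Tendsto g (𝒰 : Filter ℕ) (nhds u) →
      (∀ m, Filter.Tendsto (fun n => (f n).1 (x m)) (𝒰 : Filter ℕ) (nhds (h m))) →
      Filter.Tendsto h (𝒱 : Filter ℕ) (nhds v) →
      u = v

def DLC {X : Type*} [TopologicalSpace X] (A : Set (CpI X)) : Prop :=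
  ∀ (f : ℕ → CpI X), (∀ n, f n ∈ A) → ∀ (x : ℕ → X),
    ∀ (g h : ℕ → unitInterval) (u v : unitInterval),
      (∀ n, Filter.Tendsto (fun m => (f n).1 (x m)) Filter.atTop (nhds (g n))) →
      Filter.Tendsto g Filter.atTop (nhds u) →
      (∀ m, Filter.Tendsto (fun n => (f n).1 (x m)) Filter.atTop (nhds (h m))) →
      Filter.Tendsto h Filter.atTop (nhds v) →
      u = v

/-!
A set `A ⊆ Cp(X)` that is countably compact in `Cp(X)` is pointwise bounded, so by Tychonoff its
closure in `ℝ^X` is compact. It remains to see that every `g` in this closure is continuous. By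
countable tightness it suffices to check that `g x₀ ∈ closure (g '' range y)` whenever
`x₀ ∈ closure (range y)` for a sequence `y`. Approximate `g` within `ε / 3` by `f n ∈ A` at `x₀` and
`y 0, …, y n`; a cluster point `h ∈ Cp(X)` of `(f n)` is then within `ε / 3` of `g` at `x₀` and at
every `y i`, and continuity of `h` at `x₀` finds an `i` with `g (y i)` within `ε` of `g x₀`.
-/

lemma Cp.continuous_eval {X : Type*} [TopologicalSpace X] (x : X) :
    Continuous (fun f : Cp X => f.1 x) :=
  (continuous_apply x).comp continuous_subtype_val

lemma IsLimitPointOf.mapClusterPt {Z : Type*} [TopologicalSpace Z] {z : Z} {f : ℕ → Z}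
    (hz : IsLimitPointOf z (range f)) : MapClusterPt z atTop f := by
  refine mapClusterPt_iff_frequently.2 fun s hs => ?_
  obtain ⟨U, hUs, hU, hzU⟩ := mem_nhds_iff.1 hs
  refine Nat.frequently_atTop_iff_infinite.2 (Infinite.mono (s := f ⁻¹' U) (fun _ hn => hUs hn) ?_)
  exact Infinite.of_image f (by rw [image_preimage_eq_range_inter]; exact hz U hU hzU)

lemma CountablyCompactIn.exists_mapClusterPt {Z : Type*} [TopologicalSpace Z] {A B : Set Z}
    (hA : CountablyCompactIn A B) {f : ℕ → Z} (hf : ∀ n, f n ∈ A) :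
    ∃ z, MapClusterPt z atTop f := by
  rcases (range f).finite_or_infinite with hfin | hinf
  · obtain ⟨z, -, hz⟩ := hfin.isCompact.exists_mapClusterPt_of_frequently (l := atTop)
      (Frequently.of_forall (mem_range_self (f := f)))
    exact ⟨z, hz⟩
  · obtain ⟨z, -, hz⟩ := hA (range f) (range_subset_iff.2 hf) hinf
    exact ⟨z, hz.mapClusterPt⟩

lemma CountablyCompactIn.isBounded_image {Z Y : Type*} [TopologicalSpace Z] [PseudoMetricSpace Y]
    {A B : Set Z} (hA : CountablyCompactIn A B) {φ : Z → Y} (hφ : Continuous φ) :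
    Bornology.IsBounded (φ '' A) := by
  rcases A.eq_empty_or_nonempty with rfl | ⟨a₀, -⟩
  · simp
  by_contra hunbounded
  have hfar : ∀ n : ℕ, ∃ a ∈ A, (n : ℝ) < dist (φ a) (φ a₀) := by
    intro n
    by_contra! h
    exact hunbounded ((Metric.isBounded_closedBall (x := φ a₀) (r := n)).subset
      (by rintro _ ⟨a, ha, rfl⟩; exact h a ha))
  choose f hfA hf using hfar
  obtain ⟨z, hz⟩ := hA.exists_mapClusterPt hfA
  have hnear : ∃ᶠ n in atTop, dist (φ (f n)) (φ z) < 1 :=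
    mapClusterPt_iff_frequently.1 (hz.continuousAt_comp hφ.continuousAt) _
      (Metric.ball_mem_nhds _ one_pos)
  obtain ⟨n, hn, hge⟩ :=
    (hnear.and_eventually (eventually_ge_atTop ⌈dist (φ z) (φ a₀) + 1⌉₊)).exists
  have hceil : dist (φ z) (φ a₀) + 1 ≤ n :=
    (Nat.le_ceil _).trans (by exact_mod_cast hge)
  linarith [hf n, dist_triangle (φ (f n)) (φ z) (φ a₀)]

lemma isCompact_closure_of_forall_isCompact_closure_eval_image {ι : Type*} {Y : ι → Type*}
    [∀ i, TopologicalSpace (Y i)] {S : Set (∀ i, Y i)}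
    (hS : ∀ i, IsCompact (closure (Function.eval i '' S))) : IsCompact (closure S) :=
  (isCompact_univ_pi hS).of_isClosed_subset isClosed_closure
    ((closure_mono (subset_pi_eval_image univ S)).trans (closure_pi_set _ _).subset)

lemma exists_mem_forall_dist_lt_of_mem_closure {X Y : Type*} [PseudoMetricSpace Y]
    {S : Set (X → Y)} {g : X → Y} (hg : g ∈ closure S) {F : Set X} (hF : F.Finite)
    {ε : ℝ} (hε : 0 < ε) : ∃ f ∈ S, ∀ x ∈ F, dist (f x) (g x) < ε := by
  obtain ⟨f, hf, hfS⟩ := mem_closure_iff.1 hg (F.pi fun x => Metric.ball (g x) ε)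
    (isOpen_set_pi hF fun _ _ => Metric.isOpen_ball) fun _ _ => Metric.mem_ball_self hε
  exact ⟨f, hfS, hf⟩

lemma CountablyCompactIn.mem_closure_range_comp {X : Type*} [TopologicalSpace X]
    {A B : Set (Cp X)} (hA : CountablyCompactIn A B) {g : X → ℝ}
    (hg : g ∈ closure ((fun f : Cp X => f.1) '' A)) {y : ℕ → X} {x₀ : X}
    (hx₀ : x₀ ∈ closure (range y)) :
    g x₀ ∈ closure (range (g ∘ y)) := by
  refine Metric.mem_closure_iff.2 fun ε hε => ?_
  have happrox : ∀ n, ∃ f ∈ A, ∀ x ∈ insert x₀ (y '' Iic n), dist (f.1 x) (g x) < ε / 3 := by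
    intro n
    obtain ⟨_, ⟨f, hfA, rfl⟩, hf⟩ := exists_mem_forall_dist_lt_of_mem_closure hg
      (((finite_Iic n).image y).insert x₀) (ε := ε / 3) (by positivity)
    exact ⟨f, hfA, hf⟩
  choose f hfA hf using happrox
  obtain ⟨h, hh⟩ := hA.exists_mapClusterPt hfA
  have hclose : ∀ x ∈ insert x₀ (range y), dist (h.1 x) (g x) ≤ ε / 3 := by
    intro x hx
    refine (isClosed_le (continuous_id.dist continuous_const) continuous_const).mem_of_mapClusterPt
      (hh.continuousAt_comp (f := fun k : Cp X => k.1 x) (Cp.continuous_eval x).continuousAt) ?_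
    rcases hx with rfl | ⟨i, rfl⟩
    · exact Eventually.of_forall fun n => (hf n _ (mem_insert _ _)).le
    · exact (eventually_ge_atTop i).mono fun n hn =>
        (hf n _ (mem_insert_of_mem _ (mem_image_of_mem y hn))).le
  obtain ⟨_, ⟨_, ⟨i, rfl⟩, rfl⟩, hi⟩ := Metric.mem_closure_iff.1
    (image_closure_subset_closure_image h.2 ⟨x₀, hx₀, rfl⟩) (ε / 3) (by positivity)
  refine ⟨g (y i), mem_range_self i, ?_⟩
  calc dist (g x₀) (g (y i))
      ≤ dist (g x₀) (h.1 x₀) + dist (h.1 x₀) (h.1 (y i)) + dist (h.1 (y i)) (g (y i)) :=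
        dist_triangle4 _ _ _ _
    _ < ε := by
        rw [dist_comm (g x₀)]
        linarith [hclose x₀ (mem_insert _ _), hclose (y i) (mem_insert_of_mem _ (mem_range_self i))]

lemma CountablyTight.continuous_of_forall_mem_closure_range {X Y : Type*} [TopologicalSpace X]
    [TopologicalSpace Y] (ht : CountablyTight X) {g : X → Y}
    (hg : ∀ (y : ℕ → X), ∀ x ∈ closure (range y), g x ∈ closure (range (g ∘ y))) :
    Continuous g := by
  refine continuous_iff_image_closure_subset_closure_image.2 fun s => ?_
  rintro _ ⟨x, hx, rfl⟩
  obtain ⟨C, hCs, hC, hxC⟩ := ht s x hx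
  obtain ⟨y, rfl⟩ := hC.exists_eq_range (closure_nonempty_iff.1 ⟨x, hxC⟩)
  exact closure_mono (range_comp g y ▸ image_mono hCs) (hg y x hxC)

theorem countablyTight_weaklyGrothendieck_general
    {X : Type*} [TopologicalSpace X]
    (ht : CountablyTight X) : IsGSpace (Cp X) := by
  intro A hA
  have hemb : IsEmbedding (fun f : Cp X => f.1) := IsEmbedding.subtypeVal
  have hcontinuous : closure ((fun f : Cp X => f.1) '' A) ⊆ range (fun f : Cp X => f.1) :=
    fun g hg => ⟨⟨g, ht.continuous_of_forall_mem_closure_range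
      fun _ _ hx => hA.mem_closure_range_comp hg hx⟩, rfl⟩
  have hcompact : IsCompact (closure ((fun f : Cp X => f.1) '' A)) :=
    isCompact_closure_of_forall_isCompact_closure_eval_image fun x => by
      rw [image_image]
      exact (hA.isBounded_image (Cp.continuous_eval x)).isCompact_closure
  rw [hemb.closure_eq_preimage_closure_image]
  exact hemb.isInducing.isCompact_preimage' hcompact hcontinuous

/-- A countably tight completely regular Hausdorff space is weakly
Grothendieck: `Cp(X)` is a g-space. -/
theorem countablyTight_weaklyGrothendieck
    {X : Type*} [TopologicalSpace X] [CompletelyRegularSpace X] [T2Space X]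
    (ht : CountablyTight X) : IsGSpace (Cp X) :=
  countablyTight_weaklyGrothendieck_general ht
end

section
/- Let X be a countably tight topological space and Z any topological space. A function f : X → Z is continuous if and only if for every countable subset T ⊆ X, the restriction of f to the closure cl(T) (with the subspace topology) is continuous. -/
open Set Filter Topology

theorem CountablyTight.continuous_of_continuousOn_closure_countable {X Z : Type*}
    [TopologicalSpace X] [TopologicalSpace Z] (ht : CountablyTight X) {f : X → Z}
    (hf : ∀ T : Set X, T.Countable → ContinuousOn f (closure T)) : Continuous f := by
  refine continuous_iff_image_closure_subset_closure_image.mpr ?_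
  rintro s _ ⟨x, hx, rfl⟩
  obtain ⟨B, hBs, hBc, hxB⟩ := ht s x hx
  exact closure_mono (image_mono hBs) ((hf B hBc).image_closure (mem_image_of_mem f hxB))

/-- A map from a countably tight space is continuous iff its restriction to
the closure of every countable subset is continuous. -/
theorem continuous_iff_continuous_on_closure_of_countable
    {X Z : Type*} [TopologicalSpace X] [TopologicalSpace Z]
    (ht : CountablyTight X) (f : X → Z) :
    Continuous f ↔
      ∀ T : Set X, T.Countable → Continuous ((closure T).restrict f) := by
  refine ⟨fun hf T _ ↦ hf.comp continuous_subtype_val, fun h ↦ ?_⟩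
  exact ht.continuous_of_continuousOn_closure_countable fun T hT ↦
    continuousOn_iff_continuous_domRestrict.mpr (h T hT)
end

section
/- Let X be a normal T1 (i.e., T4) topological space and let A ⊆ X be countably compact in X. Then the closure cl(A) is a countably compact space. -/
open Set Filter Topology

/-!
If `S ⊆ closure A` were infinite without a limit point in `closure A`, it would have none in `X`
either, so (in a `T1` space) it contains a closed discrete copy `{e n}` of `ℕ`. By Tietze there is
a continuous `g : X → ℝ` with `g (e n) = n`, unbounded on `closure A` and hence on `A`. But a
continuous real function is bounded on a set countably compact in `X`: points `a n ∈ A` with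
`n < g (a n)` would have a limit point `x`, while only finitely many of them lie in the
neighbourhood `{g < g x + 1}` of `x`.
-/

namespace IsLimitPointOf

variable {Z : Type*} [TopologicalSpace Z] {x : Z} {S T : Set Z}

theorem mono (hx : IsLimitPointOf x S) (hST : S ⊆ T) : IsLimitPointOf x T :=
  fun U hU hxU => (hx U hU hxU).mono (inter_subset_inter_left U hST)

theorem mem_closure (hx : IsLimitPointOf x S) : x ∈ closure S :=
  mem_closure_iff.mpr fun U hU hxU =>
    let ⟨y, hyS, hyU⟩ := (hx U hU hxU).nonempty
    ⟨y, hyU, hyS⟩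

theorem of_image_subtype_val {Y : Set Z} {y : Y} {S : Set Y}
    (hy : IsLimitPointOf (y : Z) (Subtype.val '' S)) : IsLimitPointOf y S := by
  intro U hU hyU
  obtain ⟨V, hV, rfl⟩ := isOpen_induced_iff.mp hU
  have h := hy V hV hyU
  rw [← image_inter_preimage] at h
  exact h.of_image _

end IsLimitPointOf

section NoLimitPoint

variable {X : Type*} [TopologicalSpace X] [T1Space X] {S : Set X}

theorem isClosed_of_forall_not_isLimitPointOf (hS : ∀ x, ¬IsLimitPointOf x S) : IsClosed S := by
  refine isClosed_of_closure_subset fun x hx => ?_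
  obtain ⟨U, hU, hxU, hfin⟩ : ∃ U, IsOpen U ∧ x ∈ U ∧ (S ∩ U).Finite := by
    simpa [IsLimitPointOf] using hS x
  have hx' : x ∈ closure (U ∩ S) := hU.inter_closure ⟨hxU, hx⟩
  rw [inter_comm, hfin.isClosed.closure_eq] at hx'
  exact hx'.1

theorem exists_isClosedEmbedding_nat_of_forall_not_isLimitPointOf (hSinf : S.Infinite)
    (hS : ∀ x, ¬IsLimitPointOf x S) : ∃ e : ℕ → X, IsClosedEmbedding e ∧ ∀ n, e n ∈ S := by
  let e : ℕ → X := fun n => hSinf.natEmbedding S n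
  have he_mem : ∀ n, e n ∈ S := fun n => (hSinf.natEmbedding S n).2
  have he_closed : IsClosedMap e := fun s _ =>
    isClosed_of_forall_not_isLimitPointOf fun x hx =>
      hS x (hx.mono (image_subset_iff.mpr fun n _ => he_mem n))
  exact ⟨e, .of_continuous_injective_isClosedMap continuous_of_discreteTopology
    (Subtype.val_injective.comp (hSinf.natEmbedding S).injective) he_closed, he_mem⟩

theorem exists_continuous_nat_eq_of_forall_not_isLimitPointOf [NormalSpace X]
    (hSinf : S.Infinite) (hS : ∀ x, ¬IsLimitPointOf x S) :
    ∃ (e : ℕ → X) (g : C(X, ℝ)), (∀ n, e n ∈ S) ∧ ∀ n, g (e n) = n := by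
  obtain ⟨e, he, he_mem⟩ := exists_isClosedEmbedding_nat_of_forall_not_isLimitPointOf hSinf hS
  obtain ⟨g, hg⟩ := (⟨Nat.cast, continuous_of_discreteTopology⟩ : C(ℕ, ℝ)).exists_extension' he
  exact ⟨e, g, he_mem, congrFun hg⟩

end NoLimitPoint

namespace CountablyCompactIn

variable {X : Type*} [TopologicalSpace X] {A B : Set X}

theorem bddAbove_image (hA : CountablyCompactIn A B) {g : X → ℝ} (hg : Continuous g) :
    BddAbove (g '' A) := by
  by_contra hunb
  obtain ⟨a, haA, hga⟩ : ∃ a : ℕ → X, (∀ n, a n ∈ A) ∧ ∀ n : ℕ, (n : ℝ) < g (a n) := by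
    simp only [not_bddAbove_iff, exists_mem_image] at hunb
    choose a haA hga using fun n : ℕ => hunb n
    exact ⟨a, haA, hga⟩
  have hinf : (range a).Infinite := by
    refine (infinite_of_not_bddAbove fun ⟨b, hb⟩ => ?_).of_image g
    obtain ⟨n, hn⟩ := exists_nat_gt b
    exact (hb (mem_image_of_mem g (mem_range_self n))).not_gt (hn.trans (hga n))
  obtain ⟨x, -, hx⟩ := hA (range a) (range_subset_iff.mpr haA) hinf
  refine hx (g ⁻¹' Iio (g x + 1)) (isOpen_Iio.preimage hg) (by simp)
    (((finite_Iio ⌈g x + 1⌉₊).image a).subset ?_)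
  rintro _ ⟨⟨n, rfl⟩, hn⟩
  exact mem_image_of_mem a (Nat.lt_ceil.mpr ((hga n).trans hn))

theorem bddAbove_image_closure (hA : CountablyCompactIn A B) {g : X → ℝ}
    (hg : Continuous g) : BddAbove (g '' closure A) :=
  ((hA.bddAbove_image hg).closure).mono (image_closure_subset_closure_image hg)

end CountablyCompactIn

/-- In a normal T1 space, the closure of a set countably compact in `X` is a
countably compact space. -/
theorem closure_countablyCompact_of_normal
    {X : Type*} [TopologicalSpace X] [NormalSpace X] [T1Space X]
    (A : Set X) (hA : CountablyCompactIn A (Set.univ : Set X)) :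
    CountablyCompactSpace' (closure A) := by
  intro S hSinf
  by_contra! hS
  have hT : ∀ x : X, ¬IsLimitPointOf x (Subtype.val '' S) := fun x hx =>
    have hxA : x ∈ closure A := closure_minimal (image_subset_iff.mpr fun y _ => y.2)
      isClosed_closure hx.mem_closure
    hS ⟨x, hxA⟩ hx.of_image_subtype_val
  obtain ⟨e, g, he_mem, hge⟩ := exists_continuous_nat_eq_of_forall_not_isLimitPointOf
    (hSinf.image Subtype.val_injective.injOn) hT
  obtain ⟨b, hb⟩ := hA.bddAbove_image_closure g.continuous
  obtain ⟨n, hn⟩ := exists_nat_gt b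
  have he_closure : e n ∈ closure A := by
    obtain ⟨y, -, hy⟩ := he_mem n
    exact hy ▸ y.2
  exact hn.not_ge (by simpa only [hge] using hb (mem_image_of_mem g he_closure))
end

section
/- Let X be a countably tight completely regular Hausdorff space and A ⊆ Cp(X,[0,1]). Then the closure of A in Cp(X,[0,1]) is compact if and only if DULC(A,X) holds. -/
open Set Filter Topology

/-
If `closure A` is compact, the sequence `(f n)` has an ultralimit `F` along `𝒰` in `closure A`,
which is continuous, and both iterated limits equal `F y`.

Conversely, `closure A` is compact as soon as every pointwise limit `F` of functions in `A` is
continuous, since `[0,1]^X` is compact. By countable tightness, continuity of `F` only has to be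
tested along sequences `x m → y` converging along an ultrafilter `𝒱`. On the countable set
`{y} ∪ {x m}` the product topology is first countable, so `F` is there a limit of a sequence
`(f n)` from `A`; applied to `(f n)` and `(x m)`, DULC says `lim_𝒱 F (x m) = F y`.
-/

lemma CountablyTight.exists_ultrafilter_tendsto_of_mem_closure {X : Type*} [TopologicalSpace X]
    (ht : CountablyTight X) {S : Set X} {y : X} (hy : y ∈ closure S) :
    ∃ x : ℕ → X, (∀ m, x m ∈ S) ∧ ∃ 𝒱 : Ultrafilter ℕ, Tendsto x 𝒱 (𝓝 y) := by
  obtain ⟨B, hBS, hBc, hyB⟩ := ht S y hy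
  obtain ⟨x, rfl⟩ := hBc.exists_eq_range (closure_nonempty_iff.mp ⟨y, hyB⟩)
  have hcluster : MapClusterPt y ⊤ x := by
    rwa [mapClusterPt_def, map_top, ← mem_closure_iff_clusterPt]
  obtain ⟨𝒱, -, hx⟩ := mapClusterPt_iff_ultrafilter.mp hcluster
  exact ⟨x, fun m => hBS (mem_range_self m), 𝒱, hx⟩

lemma CountablyTight.continuous_of_ultrafilter_tendsto_comp {X Y : Type*} [TopologicalSpace X]
    [TopologicalSpace Y] (ht : CountablyTight X) {F : X → Y}
    (hF : ∀ (x : ℕ → X) (𝒱 : Ultrafilter ℕ) (y : X),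
      Tendsto x 𝒱 (𝓝 y) → Tendsto (F ∘ x) 𝒱 (𝓝 (F y))) :
    Continuous F := by
  refine continuous_iff_image_closure_subset_closure_image.mpr ?_
  rintro S _ ⟨y, hy, rfl⟩
  obtain ⟨x, hxS, 𝒱, hx⟩ := ht.exists_ultrafilter_tendsto_of_mem_closure hy
  exact mem_closure_of_tendsto (hF x 𝒱 y hx) (.of_forall fun m => mem_image_of_mem F (hxS m))

lemma exists_seq_tendsto_on_countable_of_mem_closure {X Y : Type*} [TopologicalSpace Y]
    [FirstCountableTopology Y] {s : Set (X → Y)} {F : X → Y} (hF : F ∈ closure s)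
    {T : Set X} (hT : T.Countable) :
    ∃ f : ℕ → X → Y, (∀ n, f n ∈ s) ∧ ∀ t ∈ T, Tendsto (fun n => f n t) atTop (𝓝 (F t)) := by
  have := hT.to_subtype
  obtain ⟨g, hg, hgF⟩ := mem_closure_iff_seq_limit.mp
    (image_closure_subset_closure_image (Pi.continuous_domRestrict T) ⟨F, hF, rfl⟩)
  choose f hfs hfg using hg
  refine ⟨f, hfs, fun t ht => ?_⟩
  simpa [← hfg] using tendsto_pi_nhds.mp hgF ⟨t, ht⟩

lemma Topology.IsEmbedding.isCompact_closure_of_closure_image_subset_range {α β : Type*}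
    [TopologicalSpace α] [TopologicalSpace β] [CompactSpace β] {e : α → β} (he : IsEmbedding e)
    {s : Set α} (h : closure (e '' s) ⊆ range e) : IsCompact (closure s) := by
  rw [he.isCompact_iff, he.closure_eq_preimage_closure_image, image_preimage_eq_of_subset h]
  exact isClosed_closure.isCompact

section CpI

variable {X : Type*} [TopologicalSpace X] {A : Set (CpI X)}

lemma DULC_of_isCompact_closure (hA : IsCompact (closure A)) : DULC A := by
  rintro f hfA x 𝒰 𝒱 ⟨y, hy⟩ g h u v hg hu hh hv
  obtain ⟨F, -, hF⟩ := hA.ultrafilter_le_nhds (𝒰.map f)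
    (le_principal_iff.mpr (mem_map.mpr (univ_mem' fun n => subset_closure (hfA n))))
  have hpt (t : X) : Tendsto (fun n => (f n).1 t) 𝒰 (𝓝 (F.1 t)) :=
    (((continuous_apply t).comp continuous_subtype_val).tendsto F).comp hF
  obtain rfl : g = fun n => (f n).1 y :=
    funext fun n => tendsto_nhds_unique (hg n) (((f n).2.tendsto y).comp hy)
  obtain rfl : h = fun m => F.1 (x m) := funext fun m => tendsto_nhds_unique (hh m) (hpt (x m))
  exact (tendsto_nhds_unique hu (hpt y)).trans (tendsto_nhds_unique ((F.2.tendsto y).comp hy) hv)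

lemma DULC.tendsto_comp_of_mem_closure (hD : DULC A) {F : X → unitInterval}
    (hF : F ∈ closure (Subtype.val '' A)) {x : ℕ → X} {𝒱 : Ultrafilter ℕ} {y : X}
    (hx : Tendsto x 𝒱 (𝓝 y)) : Tendsto (F ∘ x) 𝒱 (𝓝 (F y)) := by
  obtain ⟨φ, hφA, hφ⟩ :=
    exists_seq_tendsto_on_countable_of_mem_closure hF ((countable_range x).insert y)
  choose f hfA hfφ using hφA
  let 𝒰 := Ultrafilter.of (atTop : Filter ℕ)
  have h𝒰 (t : X) (ht : t ∈ insert y (range x)) :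
      Tendsto (fun n => (f n).1 t) 𝒰 (𝓝 (F t)) := by
    simpa only [hfφ] using (hφ t ht).mono_left (Ultrafilter.of_le _)
  have hlim := (𝒱.map (F ∘ x)).le_nhds_lim
  have hFy : F y = (𝒱.map (F ∘ x)).lim :=
    hD f hfA x 𝒰 𝒱 ⟨y, hx⟩ _ _ _ _ (fun n => ((f n).2.tendsto y).comp hx)
      (h𝒰 y (mem_insert _ _)) (fun m => h𝒰 (x m) (mem_insert_of_mem _ (mem_range_self m))) hlim
  rwa [hFy]

lemma DULC.closure_image_val_subset_range (ht : CountablyTight X) (hD : DULC A) :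
    closure (Subtype.val '' A) ⊆ range (Subtype.val : CpI X → X → unitInterval) :=
  fun F hF => ⟨⟨F, ht.continuous_of_ultrafilter_tendsto_comp
    fun _ _ _ hx => hD.tendsto_comp_of_mem_closure hF hx⟩, rfl⟩

end CpI

theorem relativelyCompact_iff_DULC_of_countablyTight_general
    {X : Type*} [TopologicalSpace X]
    (ht : CountablyTight X) (A : Set (CpI X)) :
    IsCompact (closure A) ↔ DULC A :=
  ⟨DULC_of_isCompact_closure, fun hD =>
    IsEmbedding.subtypeVal.isCompact_closure_of_closure_image_subset_range
      (hD.closure_image_val_subset_range ht)⟩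

/-- For countably tight `X`, a subset of `Cp(X,[0,1])` has compact closure
iff the double ultralimit condition `DULC(A,X)` holds. -/
theorem relativelyCompact_iff_DULC_of_countablyTight
    {X : Type*} [TopologicalSpace X] [CompletelyRegularSpace X] [T2Space X]
    (ht : CountablyTight X) (A : Set (CpI X)) :
    IsCompact (closure A) ↔ DULC A :=
  relativelyCompact_iff_DULC_of_countablyTight_general ht A
end

section
/- Let Y be a dense subspace of a completely regular Hausdorff space X. If Y is Grothendieck, then X is Grothendieck. -/
open Set Filter Topology

/-- `X` is Grothendieck if `Cp(X)` is a hereditary g-space. -/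
def IsGrothendieck (X : Type*) [TopologicalSpace X] : Prop :=
  IsHereditaryGSpace (Cp X)

/-!
A subset `A` countably compact in `B ⊆ Cp(X)` is pointwise bounded, so its closure `K` in `ℝ^X`
is compact and it suffices to show `K ⊆ B`. Restriction to the dense set `Y` is a continuous
injection `Cp(X) → Cp(Y)`, so it preserves relative countable compactness; as `Cp(Y)` is a
hereditary g-space, for `f ∈ K` and each neighbourhood `U` of `f` this yields `b_U ∈ B` in the
closure of `A ∩ U` agreeing with `f` on `Y`. By density all `b_U` are one function `b`, which
then lies in the closure of every neighbourhood of `f`, hence equals `f`.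
-/

section

variable {Z V : Type*} [TopologicalSpace Z] [TopologicalSpace V]

theorem IsLimitPointOf.mem_closure_s15 {x : Z} {S : Set Z} (h : IsLimitPointOf x S) :
    x ∈ closure S :=
  mem_closure_iff.2 fun U hU hxU => (inter_comm U S ▸ h U hU hxU).nonempty

theorem IsLimitPointOf.image {x : Z} {S : Set Z} (h : IsLimitPointOf x S) {e : Z → V}
    (he : Continuous e) (he' : Function.Injective e) : IsLimitPointOf (e x) (e '' S) := by
  intro U hU hxU
  rw [← image_inter_preimage]
  exact (h _ (hU.preimage he) hxU).image he'.injOn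

theorem IsLimitPointOf.of_image {x : Z} {S : Set Z} {e : Z → V} (he : IsEmbedding e)
    (h : IsLimitPointOf (e x) (e '' S)) : IsLimitPointOf x S := by
  intro U hU hxU
  obtain ⟨W, hW, rfl⟩ := he.isInducing.isOpen_iff.1 hU
  have hinf := h W hW hxU
  rw [← image_inter_preimage] at hinf
  exact hinf.of_image e

namespace CountablyCompactIn

variable {A B : Set Z}

theorem mono_left (h : CountablyCompactIn A B) {A' : Set Z} (hA' : A' ⊆ A) :
    CountablyCompactIn A' B :=
  fun S hS => h S (hS.trans hA')

theorem inter_closure (h : CountablyCompactIn A B) : CountablyCompactIn A (B ∩ closure A) := by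
  intro S hS hSi
  obtain ⟨x, hxB, hx⟩ := h S hS hSi
  exact ⟨x, ⟨hxB, closure_mono hS hx.mem_closure_s15⟩, hx⟩

theorem image (h : CountablyCompactIn A B) {e : Z → V} (he : Continuous e)
    (he' : Function.Injective e) : CountablyCompactIn (e '' A) (e '' B) := by
  intro S hS hSi
  have hS' : e '' (A ∩ e ⁻¹' S) = S := by rw [image_inter_preimage, inter_eq_right.2 hS]
  obtain ⟨x, hxB, hx⟩ := h _ inter_subset_left (Set.Infinite.of_image e (hS'.symm ▸ hSi))
  exact ⟨e x, mem_image_of_mem e hxB, hS' ▸ hx.image he he'⟩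

theorem preimage (h : CountablyCompactIn A B) {e : V → Z} (he : IsEmbedding e)
    (hB : B ⊆ range e) : CountablyCompactIn (e ⁻¹' A) (e ⁻¹' B) := by
  intro S hS hSi
  obtain ⟨_, hx, hlim⟩ := h (e '' S) (image_subset_iff.2 hS) (hSi.image he.injective.injOn)
  obtain ⟨z, rfl⟩ := hB hx
  exact ⟨z, hx, hlim.of_image he⟩

theorem bddAbove_image_s15 (h : CountablyCompactIn A B) {φ : Z → ℝ} (hφ : Continuous φ) :
    BddAbove (φ '' A) := by
  by_contra hφA
  have hlarge : ∀ n : ℕ, ∃ a ∈ A, (n : ℝ) < φ a := fun n => by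
    obtain ⟨_, ⟨a, haA, rfl⟩, hlt⟩ := not_bddAbove_iff.1 hφA n
    exact ⟨a, haA, hlt⟩
  choose a haA ha using hlarge
  have hinf : (range a).Infinite := fun hfin => by
    obtain ⟨M, hM⟩ := (hfin.image φ).bddAbove
    have := hM (mem_image_of_mem φ (mem_range_self ⌈M⌉₊))
    linarith [ha ⌈M⌉₊, Nat.le_ceil M]
  obtain ⟨p, -, hp⟩ := h _ (range_subset_iff.2 haA) hinf
  refine hp _ (isOpen_Iio.preimage hφ) (lt_add_one (φ p))
    (((finite_Iio ⌈φ p + 1⌉₊).image a).subset ?_)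
  rintro _ ⟨⟨n, rfl⟩, hn⟩
  refine ⟨n, ?_, rfl⟩
  have : (n : ℝ) < ⌈φ p + 1⌉₊ := (ha n).trans (hn.trans_le (Nat.le_ceil _))
  exact_mod_cast this

end CountablyCompactIn

theorem IsHereditaryGSpace.closure_image_subset_image [T2Space V] (hg : IsHereditaryGSpace Z)
    {j : Z → V} (hj : Continuous j) {T M : Set Z} (hTM : T ⊆ M) (h : CountablyCompactIn T M) :
    closure (j '' T) ⊆ j '' M := by
  have hK : IsCompact (closure ((↑) ⁻¹' T : Set M)) :=
    hg M _ (by simpa using h.preimage IsEmbedding.subtypeVal Subtype.range_coe.superset)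
  have hTK : j '' T ⊆ (j ∘ (↑)) '' closure ((↑) ⁻¹' T : Set M) := by
    rintro _ ⟨z, hz, rfl⟩
    exact ⟨⟨z, hTM hz⟩, subset_closure hz, rfl⟩
  calc closure (j '' T) ⊆ (j ∘ (↑)) '' closure ((↑) ⁻¹' T : Set M) :=
        closure_minimal hTK (hK.image (hj.comp continuous_subtype_val)).isClosed
    _ ⊆ j '' M := by
        rw [image_comp]
        exact image_mono (image_subset_range _ _ |>.trans Subtype.range_coe.subset)

theorem Topology.IsEmbedding.isCompact_closure {e : V → Z} (he : IsEmbedding e) {s : Set V}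
    (hc : IsCompact (closure (e '' s))) (hr : closure (e '' s) ⊆ range e) :
    IsCompact (closure s) := by
  rwa [he.isCompact_iff, he.closure_eq_preimage_closure_image, image_preimage_eq_of_subset hr]

end

namespace Cp

variable {X : Type*} [TopologicalSpace X]

-- `Cp X` is not reducible to its subtype, so rewriting with `Subtype.val` images fails on it.
def toFun (f : Cp X) : X → ℝ := f.1

theorem isEmbedding_toFun : IsEmbedding (toFun : Cp X → X → ℝ) := IsEmbedding.subtypeVal

theorem continuous_toFun : Continuous (toFun : Cp X → X → ℝ) := isEmbedding_toFun.continuous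

theorem ext_of_eqOn_dense {Y : Set X} (hY : Dense Y) {f g : Cp X} (h : EqOn f.1 g.1 Y) :
    f = g :=
  Subtype.ext (Continuous.ext_on hY f.2 g.2 h)

def restrict (Y : Set X) (f : Cp X) : Cp Y :=
  ⟨Y.domRestrict f.1, f.2.comp continuous_subtype_val⟩

theorem continuous_restrict (Y : Set X) : Continuous (restrict Y) :=
  ((Pi.continuous_domRestrict Y).comp continuous_toFun).subtype_mk _

theorem restrict_injective {Y : Set X} (hY : Dense Y) : Function.Injective (restrict Y) :=
  fun _ _ h => ext_of_eqOn_dense hY fun y hy => congrFun (congrArg Subtype.val h) ⟨y, hy⟩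

theorem isCompact_closure_image_toFun {A B : Set (Cp X)} (hA : CountablyCompactIn A B) :
    IsCompact (closure (toFun '' A)) := by
  have hbdd (x : X) : BddAbove ((fun f : Cp X => |f.1 x|) '' A) :=
    hA.bddAbove_image_s15 ((continuous_apply x).comp continuous_toFun).abs
  choose M hM using hbdd
  refine (isCompact_univ_pi fun x => isCompact_Icc (a := -M x) (b := M x)).closure_of_subset ?_
  rintro _ ⟨f, hf, rfl⟩ x -
  exact abs_le.1 (hM x (mem_image_of_mem _ hf))

variable {Y : Set X}

theorem exists_eqOn_of_mem_closure (hY : Dense Y) (hG : IsGrothendieck Y) {A B : Set (Cp X)}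
    (hAB : A ⊆ B) (hA : CountablyCompactIn A B) {f : X → ℝ}
    (hf : f ∈ closure (toFun '' A)) : ∃ b ∈ B ∩ closure A, EqOn b.1 f Y := by
  have hT := hA.inter_closure.image (continuous_restrict Y) (restrict_injective hY)
  have hfY : Y.domRestrict f ∈ closure (toFun '' (restrict Y '' A)) := by
    have := mem_closure_image (Pi.continuous_domRestrict Y).continuousAt hf
    rwa [image_image] at this ⊢
  obtain ⟨_, ⟨b, hb, rfl⟩, hbf⟩ := hG.closure_image_subset_image continuous_toFun
    (image_mono (subset_inter hAB subset_closure)) hT hfY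
  exact ⟨b, hb, fun y hy => congrFun hbf ⟨y, hy⟩⟩

theorem closure_image_toFun_subset (hY : Dense Y) (hG : IsGrothendieck Y) {A B : Set (Cp X)}
    (hAB : A ⊆ B) (hA : CountablyCompactIn A B) :
    closure (toFun '' A) ⊆ toFun '' B := by
  intro f hf
  obtain ⟨b, ⟨hbB, -⟩, hbf⟩ := exists_eqOn_of_mem_closure hY hG hAB hA hf
  refine ⟨b, hbB, eq_of_nhds_neBot (clusterPt_iff_forall_mem_closure.2 fun U hU => ?_)⟩
  have hfU : f ∈ closure (toFun '' (A ∩ toFun ⁻¹' interior U)) := by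
    rw [image_inter_preimage, inter_comm]
    exact isOpen_interior.inter_closure ⟨mem_interior_iff_mem_nhds.2 hU, hf⟩
  obtain ⟨b', ⟨-, hb'⟩, hb'f⟩ := exists_eqOn_of_mem_closure hY hG
    (inter_subset_left.trans hAB) (hA.mono_left inter_subset_left) hfU
  obtain rfl : b' = b := ext_of_eqOn_dense hY (hb'f.trans hbf.symm)
  exact closure_mono (image_subset_iff.2 (inter_subset_right.trans (preimage_mono interior_subset)))
    (image_closure_subset_closure_image continuous_toFun ⟨b', hb', rfl⟩)

end Cp

theorem grothendieck_of_dense_subspace_general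
    {X : Type*} [TopologicalSpace X]
    (Y : Set X) (hY : Dense Y) (hG : IsGrothendieck Y) : IsGrothendieck X := by
  intro B A hA
  have hA' : CountablyCompactIn (Subtype.val '' A : Set (Cp X)) B := by
    simpa using hA.image continuous_subtype_val Subtype.val_injective
  have hAB : (Subtype.val '' A : Set (Cp X)) ⊆ B := image_subset_iff.2 fun b _ => b.2
  have he : IsEmbedding (Cp.toFun ∘ (Subtype.val : B → Cp X)) :=
    Cp.isEmbedding_toFun.comp IsEmbedding.subtypeVal
  refine he.isCompact_closure ?_ ?_
  · rw [image_comp]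
    exact Cp.isCompact_closure_image_toFun hA'
  · rw [image_comp, range_comp, Subtype.range_coe]
    exact Cp.closure_image_toFun_subset hY hG hAB hA'

/-- If a dense subspace `Y` of `X` is Grothendieck, so is `X`. -/
theorem grothendieck_of_dense_subspace
    {X : Type*} [TopologicalSpace X] [CompletelyRegularSpace X] [T2Space X]
    (Y : Set X) (hY : Dense Y) (hG : IsGrothendieck Y) : IsGrothendieck X :=
  grothendieck_of_dense_subspace_general Y hY hG
end

section
/- Let X and Y be completely regular Hausdorff spaces and f : X → Y a continuous surjection. If X is Grothendieck, then Y is Grothendieck. -/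
open Set Filter Topology

/-! Precomposition with a continuous surjection `f : X → Y` embeds `Cp Y` into `Cp X`, and
being a hereditary g-space passes to subspaces, hence along embeddings. -/

section

variable {Z W : Type*} [TopologicalSpace Z] [TopologicalSpace W]

lemma IsLimitPointOf.image_homeomorph (h : Z ≃ₜ W) {x : Z} {S : Set Z}
    (hx : IsLimitPointOf x S) : IsLimitPointOf (h x) (h '' S) := by
  intro U hU hxU
  have hinf : (S ∩ h ⁻¹' U).Infinite := hx _ (hU.preimage h.continuous) hxU
  rw [← h.image_preimage U, ← image_inter h.injective]
  exact hinf.image h.injective.injOn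

lemma CountablyCompactIn.image_homeomorph (h : Z ≃ₜ W) {A : Set Z}
    (hA : CountablyCompactIn A univ) : CountablyCompactIn (h '' A) univ := by
  intro S hS hSinf
  have hSA : h ⁻¹' S ⊆ A := by
    rw [← h.image_symm]
    exact (image_mono hS).trans (h.symm_image_image A).subset
  obtain ⟨x, -, hx⟩ := hA _ hSA (hSinf.preimage (by simp [h.surjective.range_eq]))
  refine ⟨h x, mem_univ _, ?_⟩
  simpa only [h.image_preimage] using hx.image_homeomorph h

lemma IsGSpace.of_homeomorph (h : Z ≃ₜ W) (hW : IsGSpace W) : IsGSpace Z := by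
  intro A hA
  rw [← h.isCompact_image, h.image_closure]
  exact hW _ (hA.image_homeomorph h)

lemma IsHereditaryGSpace.of_isEmbedding {e : Z → W} (he : IsEmbedding e)
    (hW : IsHereditaryGSpace W) : IsHereditaryGSpace Z := fun B =>
  (hW (range (e ∘ (↑) : B → W))).of_homeomorph (he.comp .subtypeVal).toHomeomorph

lemma Pi.isEmbedding_precomp_of_surjective {ι ι' : Type*} {φ : ι' → ι}
    (hφ : Function.Surjective φ) : IsEmbedding (· ∘ φ : (ι → W) → ι' → W) := by
  refine ⟨⟨?_⟩, fun g₁ g₂ h => hφ.injective_comp_right h⟩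
  -- the coordinates `φ i'` run through all of `ι`
  rw [Pi.induced_precomp]
  exact (hφ.iInf_comp fun i => TopologicalSpace.induced (Function.eval i) ‹_›).symm

end

def Cp.precomp {X Y : Type*} [TopologicalSpace X] [TopologicalSpace Y] {f : X → Y}
    (hf : Continuous f) (g : Cp Y) : Cp X :=
  ⟨g.1 ∘ f, g.2.comp hf⟩

lemma Cp.isEmbedding_precomp {X Y : Type*} [TopologicalSpace X] [TopologicalSpace Y]
    {f : X → Y} (hf : Continuous f) (hsurj : Function.Surjective f) :
    IsEmbedding (Cp.precomp hf) :=
  IsEmbedding.subtypeVal.of_comp_iff.mp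
    ((Pi.isEmbedding_precomp_of_surjective hsurj).comp IsEmbedding.subtypeVal)

theorem grothendieck_of_continuous_image_general
    {X Y : Type*} [TopologicalSpace X]
    [TopologicalSpace Y]
    (f : X → Y) (hf : Continuous f) (hsurj : Function.Surjective f)
    (hG : IsGrothendieck X) : IsGrothendieck Y :=
  hG.of_isEmbedding (Cp.isEmbedding_precomp hf hsurj)

/-- The continuous image of a Grothendieck space is Grothendieck. -/
theorem grothendieck_of_continuous_image
    {X Y : Type*} [TopologicalSpace X] [CompletelyRegularSpace X] [T2Space X]
    [TopologicalSpace Y] [CompletelyRegularSpace Y] [T2Space Y]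
    (f : X → Y) (hf : Continuous f) (hsurj : Function.Surjective f)
    (hG : IsGrothendieck X) : IsGrothendieck Y :=
  grothendieck_of_continuous_image_general f hf hsurj hG
end

section
/- For an infinite completely regular Hausdorff space X, the space Cp(X) is second countable if and only if X is countable, and Cp(X) is first countable if and only if X is countable. -/
/-! If `Cp(X)` is first countable, fix a countable neighbourhood base of `0`. Each basic
neighbourhood contains all functions vanishing on some finite set `F n`. If a point `x` lay
outside every `F n`, complete regularity would give a continuous function vanishing on `F n`
(closed, as `X` is T₁) with value `1` at `x`, so no basic neighbourhood would fit inside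
`{u | |u x| < 1}`. Hence `X = ⋃ n, F n` is countable. Conversely, for countable `X` the space
`Cp(X)` is a subspace of the second countable product `ℝ^X`. -/

open Set Filter Topology

namespace Cp

variable {X : Type*} [TopologicalSpace X]

instance [Countable X] : SecondCountableTopology (Cp X) :=
  TopologicalSpace.secondCountableTopology_induced {f : X → ℝ // Continuous f} (X → ℝ) Subtype.val

theorem exists_finite_eqOn_subset {f : Cp X} {U : Set (Cp X)} (hU : U ∈ 𝓝 f) :
    ∃ F : Set X, F.Finite ∧ {g : Cp X | EqOn g.1 f.1 F} ⊆ U := by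
  have hU' : U ∈ comap (fun g : Cp X => g.1) (𝓝 f.1) := nhds_induced (fun g : Cp X => g.1) f ▸ hU
  obtain ⟨V, hV, hVU⟩ := mem_comap.1 hU'
  rw [nhds_pi, Filter.mem_pi] at hV
  obtain ⟨I, hI, t, ht, htV⟩ := hV
  refine ⟨I, hI, fun g hg => hVU (htV fun i hi => ?_)⟩
  simpa [hg hi] using mem_of_mem_nhds (ht i)

theorem mem_of_forall_eqOn_zero_abs_lt_one [CompletelyRegularSpace X] {F : Set X}
    (hF : IsClosed F) {x : X} (h : ∀ g : Cp X, EqOn g.1 0 F → |g.1 x| < 1) : x ∈ F := by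
  by_contra hx
  obtain ⟨f, hf, hfx, hfF⟩ := CompletelyRegularSpace.completely_regular x F hF hx
  have := h ⟨fun y => 1 - f y, by fun_prop⟩ fun y hy => by simp [hfF hy]
  simp [hfx] at this

theorem countable_of_firstCountableTopology [CompletelyRegularSpace X] [T1Space X]
    [FirstCountableTopology (Cp X)] : Countable X := by
  let z : Cp X := ⟨0, continuous_const⟩
  obtain ⟨U, hU⟩ := (𝓝 z).exists_antitone_basis
  choose F hFfin hFU using fun n => exists_finite_eqOn_subset (hU.mem n)
  have hcover : ⋃ n, F n = univ := by
    refine iUnion_eq_univ_iff.2 fun x => ?_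
    have hW : {u : Cp X | |u.1 x| < 1} ∈ 𝓝 z :=
      (isOpen_lt ((continuous_apply x).comp continuous_subtype_val).abs continuous_const).mem_nhds
        (by simp [z])
    obtain ⟨n, hn⟩ := hU.mem_iff.1 hW
    exact ⟨n, mem_of_forall_eqOn_zero_abs_lt_one (hFfin n).isClosed fun g hg => hn (hFU n hg)⟩
  exact countable_univ_iff.1 (hcover ▸ countable_iUnion fun n => (hFfin n).countable)

end Cp

theorem cp_secondCountable_and_firstCountable_iff_countable_general
    {X : Type*} [TopologicalSpace X] [CompletelyRegularSpace X] [T2Space X] :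
    (SecondCountableTopology (Cp X) ↔ Countable X) ∧
    (FirstCountableTopology (Cp X) ↔ Countable X) :=
  ⟨⟨fun _ => Cp.countable_of_firstCountableTopology, fun _ => inferInstance⟩,
    ⟨fun _ => Cp.countable_of_firstCountableTopology, fun _ => inferInstance⟩⟩

/-- For an infinite completely regular Hausdorff space `X`, `Cp(X)` is
second countable iff `X` is countable, and `Cp(X)` is first countable iff `X` is
countable. -/
theorem cp_secondCountable_and_firstCountable_iff_countable
    {X : Type*} [TopologicalSpace X] [CompletelyRegularSpace X] [T2Space X]
    [Infinite X] :
    (SecondCountableTopology (Cp X) ↔ Countable X) ∧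
    (FirstCountableTopology (Cp X) ↔ Countable X) :=
  cp_secondCountable_and_firstCountable_iff_countable_general
end
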